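/- For all a ∈ ℕ, b ∈ ℤ, the quantity ρ(a,b) := #{n ∈ ℕ, n > -b/a : rad(a'n+b') | g} (where g = gcd(a,b), a' = a/g, b' = b/g) lies in {0, 1, ∞}; i.e., if ρ(a,b) ≥ 2 then ρ(a,b) = ∞. -/

import Mathlib

/-!
If `n₀ ∈ Rset a b` and `m = a'n₀ + b' ≥ 2`, then `m` is coprime to `a'`, so by Euler
`m ^ (t φ(a') + 1) ≡ m [MOD a']` for every `t`. Each of these powers is therefore again of the
form `a'n + b'` with `n ≥ n₀`, and it has the same radical as `m`; distinct `t` give distinct `n`.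
Two distinct elements of `Rset a b` cannot both have `a'n + b' = 1`, so one of them has `m ≥ 2`.
-/

/-- The radical (squarefree kernel) of a natural number. -/
def rad (n : ℕ) : ℕ := ∏ p ∈ n.primeFactors, p

/-- The set of positive integers `n` with `a'n + b' > 0` and `rad(a'n + b') ∣ g`,
where `g = gcd(a,b)`, `a' = a/g`, `b' = b/g`; its cardinality is `ρ(a,b)`. -/
def Rset (a : ℕ) (b : ℤ) : Set ℕ :=
  {n : ℕ | 0 < n ∧ 0 < (↑(a / Int.gcd a b) : ℤ) * n + b / (Int.gcd a b : ℤ) ∧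
    rad ((↑(a / Int.gcd a b) * n + b / (Int.gcd a b : ℤ)).toNat) ∣ Int.gcd a b}

open Nat

lemma rad_pow (m : ℕ) {k : ℕ} (hk : k ≠ 0) : rad (m ^ k) = rad m := by
  rw [rad, rad, Nat.primeFactors_pow m hk]

lemma Nat.ModEq.pow_totient_mul_add_one {m a : ℕ} (h : m.Coprime a) (t : ℕ) :
    m ^ (t * φ a + 1) ≡ m [MOD a] := by
  simpa [pow_succ, pow_mul', one_pow] using ((Nat.ModEq.pow_totient h).pow t).mul_right m

lemma exists_pow_totient_mul_add_one_eq_add_mul {m a : ℕ} (h : m.Coprime a) (t : ℕ) :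
    ∃ c, m ^ (t * φ a + 1) = m + a * c := by
  have hle : m ≤ m ^ (t * φ a + 1) := Nat.le_self_pow (Nat.succ_ne_zero _) m
  obtain ⟨c, hc⟩ := (Nat.modEq_iff_dvd' hle).mp (Nat.ModEq.pow_totient_mul_add_one h t).symm
  exact ⟨c, by omega⟩

def radDvdSet (a : ℕ) (B : ℤ) (g : ℕ) : Set ℕ :=
  {n : ℕ | 0 < n ∧ 0 < (a : ℤ) * n + B ∧ rad (((a : ℤ) * n + B).toNat) ∣ g}

lemma Rset_eq_radDvdSet (a : ℕ) (b : ℤ) :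
    Rset a b = radDvdSet (a / Int.gcd a b) (b / Int.gcd a b) (Int.gcd a b) := rfl

section radDvdSet

variable {a g : ℕ} {B : ℤ}

theorem radDvdSet_infinite_of_two_le (ha : 0 < a) (hcop : IsCoprime (a : ℤ) B) {n₀ : ℕ}
    (hn₀ : n₀ ∈ radDvdSet a B g) (htwo : 2 ≤ (a : ℤ) * n₀ + B) : (radDvdSet a B g).Infinite := by
  obtain ⟨hn₀_pos, hpos, hrad⟩ := hn₀
  obtain ⟨m, hm⟩ := Int.eq_ofNat_of_zero_le hpos.le
  rw [hm, Int.toNat_natCast] at hrad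
  have hm_two : 2 ≤ m := by omega
  have hcop_m : m.Coprime a := by
    rw [← Nat.isCoprime_iff_coprime, ← hm, add_comm]
    exact (hcop.add_mul_left_right n₀).symm
  choose c hc using exists_pow_totient_mul_add_one_eq_add_mul hcop_m
  have hvalue (t : ℕ) : (a : ℤ) * ↑(n₀ + c t) + B = ↑(m ^ (t * φ a + 1)) := by
    rw [hc t]; push_cast; linarith
  refine Set.infinite_of_injective_forall_mem (f := fun t => n₀ + c t) (fun t₁ t₂ h => ?_)
    fun t => ⟨by omega, ?_, ?_⟩
  · have hpow := hvalue t₁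
    rw [show n₀ + c t₁ = n₀ + c t₂ from h, hvalue t₂, Nat.cast_inj] at hpow
    have := Nat.pow_right_injective hm_two hpow
    have hφ : 0 < φ a := Nat.totient_pos.mpr ha
    exact (Nat.mul_right_cancel hφ (by omega)).symm
  · rw [hvalue t]; positivity
  · rw [hvalue t, Int.toNat_natCast, rad_pow m (Nat.succ_ne_zero _)]
    exact hrad

theorem exists_mem_radDvdSet_two_le (ha : 0 < a) {n₁ n₂ : ℕ} (h₁ : n₁ ∈ radDvdSet a B g)
    (h₂ : n₂ ∈ radDvdSet a B g) (hne : n₁ ≠ n₂) :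
    ∃ n ∈ radDvdSet a B g, 2 ≤ (a : ℤ) * n + B := by
  by_contra! h
  have h₁' := h n₁ h₁
  have h₂' := h n₂ h₂
  have : (a : ℤ) * n₁ = a * n₂ := by linarith [h₁.2.1, h₂.2.1]
  exact hne (by exact_mod_cast mul_left_cancel₀ (by positivity) this)

theorem radDvdSet_infinite_of_ne (ha : 0 < a) (hcop : IsCoprime (a : ℤ) B) {n₁ n₂ : ℕ}
    (h₁ : n₁ ∈ radDvdSet a B g) (h₂ : n₂ ∈ radDvdSet a B g) (hne : n₁ ≠ n₂) :
    (radDvdSet a B g).Infinite :=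
  let ⟨_, hn, htwo⟩ := exists_mem_radDvdSet_two_le ha h₁ h₂ hne
  radDvdSet_infinite_of_two_le ha hcop hn htwo

end radDvdSet

theorem rho_zero_one_or_infinite (a : ℕ) (ha : 0 < a) (b : ℤ) (n₁ n₂ : ℕ)
    (h₁ : n₁ ∈ Rset a b) (h₂ : n₂ ∈ Rset a b) (hne : n₁ ≠ n₂) :
    (Rset a b).Infinite := by
  rw [Rset_eq_radDvdSet] at *
  have hg : 0 < Int.gcd a b := Int.gcd_pos_of_ne_zero_left b (by exact_mod_cast ha.ne')
  have hg_dvd : Int.gcd a b ∣ a := by exact_mod_cast Int.gcd_dvd_left (a := (a : ℤ)) (b := b)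
  have ha' : 0 < a / Int.gcd a b := Nat.div_pos (Nat.le_of_dvd ha hg_dvd) hg
  have hcop : IsCoprime ((a / Int.gcd a b : ℕ) : ℤ) (b / Int.gcd a b) := by
    rw [Int.isCoprime_iff_gcd_eq_one, Int.natCast_div]
    exact Int.gcd_div_gcd_div_gcd (by exact_mod_cast hg)
  exact radDvdSet_infinite_of_ne ha' hcop h₁ h₂ hne
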